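/- Let α > -1/2, a ≥ 1 and 0 < σ < α+1. There exists a constant C, depending only on α and σ (in particular, independent of j), such that for every integer j ≥ 0 and all x, y > 0 one has x^{aj} y^{aj} H_{α+aj,σ}(x,y) ≤ C · \overline{K}_{α,σ}(x,y), where \overline{K}_{α,σ}(x,y) = (xy)^{−α−1/2} ∫₀¹ (log((1+ξ)/(1−ξ)))^{σ−1} ξ^{−1/2} (1−ξ²)^{−1/2} exp( −(x−y)²/(4ξ) − ξ(x+y)²/4 ) dξ. -/

import Mathlib

open MeasureTheory
open scoped ENNReal NNReal

/-- One-dimensional Laguerre heat kernel of Hermite type `G^H_{α,t}(x,y)`. -/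
noncomputable def lagHeatH (α t x y : ℝ) : ℝ :=
  (x * y) ^ (α + 1/2) * Real.sinh (2 * t) ^ (-1 - α) *
    ∫ s in (-1:ℝ)..1,
      Real.exp (-(1/2) * (Real.cosh (2 * t) / Real.sinh (2 * t)) * (x ^ 2 + y ^ 2)
          - x * y * s / Real.sinh (2 * t)) *
        ((1 - s ^ 2) ^ (α - 1/2) / (2 ^ α * Real.sqrt Real.pi * Real.Gamma (α + 1/2)))

/-- Laguerre heat kernel of convolution type `G_{α,t}(x,y) = (xy)^{−α−1/2} G^H_{α,t}(x,y)`. -/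
noncomputable def lagHeatC (α t x y : ℝ) : ℝ :=
  (x * y) ^ (-α - 1/2) * lagHeatH α t x y

/-- Potential kernel `H_{α,σ}(x,y) = Γ(σ)⁻¹ ∫₀^∞ G_{α,t}(x,y) t^{σ−1} dt`. -/
noncomputable def potC (α σ x y : ℝ) : ℝ :=
  (Real.Gamma σ)⁻¹ * ∫ t in Set.Ioi (0:ℝ), lagHeatC α t x y * t ^ (σ - 1)

/-- The majorant kernel `\overline{K}_{α,σ}(x,y)`. -/
noncomputable def Kbar (α σ x y : ℝ) : ℝ :=
  (x * y) ^ (-α - 1/2) *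
    ∫ ξ in Set.Ioo (0:ℝ) 1,
      (Real.log ((1 + ξ) / (1 - ξ))) ^ (σ - 1) * ξ ^ (-(1:ℝ)/2) * (1 - ξ ^ 2) ^ (-(1:ℝ)/2) *
        Real.exp (-(x - y) ^ 2 / (4 * ξ) - ξ * (x + y) ^ 2 / 4)

/-!
Substituting `ξ = tanh t` turns `K̄_{α,σ}(x,y)` into
`2^{σ-1/2} (xy)^{-α-1/2} ∫₀^∞ sinh(2t)^{-1/2} exp(-(x-y)²/(4 tanh t) - tanh t (x+y)²/4) t^{σ-1} dt`.
The heat kernel `G_{β,t}(x,y)` is a Poisson integral of the Bessel function `I_β(z)` at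
`z = xy / sinh 2t`, and the elementary bound `z^{β+1/2} e^{-z} I_β(z) ≲ 1` holds with a constant
independent of `β > -1/2` (the factors `2^β Γ(β+1/2)` cancel). This gives
`(xy)^{β+1/2} G_{β,t}(x,y) ≤ (2√2/√π) sinh(2t)^{-1/2} exp(…)`, and for `β = α + aj` the weight
`(xy)^{aj}` turns `(xy)^{-β-1/2}` into `(xy)^{-α-1/2}`; integrating in `t^{σ-1} dt` concludes.
When `K̄` diverges, the reverse bound `z^{β+1/2} e^{-z} I_β(z) ≳ 1` for `z ≥ 1` (small `t`) shows
that the potential integral diverges as well, so both sides are `0`.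
-/

open Real Set intervalIntegral

namespace Real

lemma tanh_pos {t : ℝ} (ht : 0 < t) : 0 < tanh t := by
  rw [tanh_eq_sinh_div_cosh]
  exact div_pos (sinh_pos_iff.2 ht) (cosh_pos t)

lemma one_sub_tanh_sq_pos (t : ℝ) : 0 < 1 - tanh t ^ 2 := by
  linarith [tanh_sq_lt_one t]

lemma hasDerivAt_tanh (t : ℝ) : HasDerivAt tanh (1 - tanh t ^ 2) t := by
  have h := (hasDerivAt_sinh t).fun_div (hasDerivAt_cosh t) (cosh_pos t).ne'
  rw [show tanh = fun u => sinh u / cosh u from funext fun u => tanh_eq_sinh_div_cosh u]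
  refine h.congr_deriv ?_
  have := cosh_pos t
  field_simp

lemma continuous_tanh : Continuous tanh :=
  continuous_iff_continuousAt.2 fun t => (hasDerivAt_tanh t).continuousAt

lemma tanh_image_Ioi_zero : tanh '' Ioi 0 = Ioo 0 1 := by
  ext u
  constructor
  · rintro ⟨t, ht, rfl⟩
    exact ⟨tanh_pos ht, tanh_lt_one t⟩
  · rintro hu
    exact ⟨artanh u, artanh_pos hu, tanh_artanh ⟨by linarith [hu.1], hu.2⟩⟩

lemma log_one_add_tanh_div_one_sub_tanh (t : ℝ) :
    log ((1 + tanh t) / (1 - tanh t)) = 2 * t := by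
  have h := artanh_eq_half_log ⟨(neg_one_lt_tanh t).le, (tanh_lt_one t).le⟩
  rw [artanh_tanh] at h
  linarith

lemma sinh_two_mul_eq_tanh (t : ℝ) : sinh (2 * t) = 2 * tanh t / (1 - tanh t ^ 2) := by
  rw [eq_div_iff (one_sub_tanh_sq_pos t).ne', tanh_eq_sinh_div_cosh, sinh_two_mul]
  have := cosh_pos t
  field_simp
  rw [cosh_sq_sub_sinh_sq t]
  ring

lemma cosh_two_mul_eq_tanh (t : ℝ) :
    cosh (2 * t) = (1 + tanh t ^ 2) / (1 - tanh t ^ 2) := by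
  rw [eq_div_iff (one_sub_tanh_sq_pos t).ne', tanh_eq_sinh_div_cosh, cosh_two_mul]
  have := cosh_pos t
  field_simp
  nlinarith [cosh_sq_sub_sinh_sq t]

end Real

lemma heat_exponent_eq_tanh {t : ℝ} (ht : 0 < t) (x y : ℝ) :
    -(1/2) * (cosh (2 * t) / sinh (2 * t)) * (x ^ 2 + y ^ 2) + x * y / sinh (2 * t)
      = -(x - y) ^ 2 / (4 * tanh t) - tanh t * (x + y) ^ 2 / 4 := by
  have := tanh_pos ht
  have := one_sub_tanh_sq_pos t
  rw [cosh_two_mul_eq_tanh, sinh_two_mul_eq_tanh]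
  field_simp
  ring

lemma sinh_two_mul_rpow_neg_half {t : ℝ} (ht : 0 < t) :
    sinh (2 * t) ^ (-(1:ℝ)/2)
      = 2 ^ (-(1:ℝ)/2) * tanh t ^ (-(1:ℝ)/2) * (1 - tanh t ^ 2) ^ ((1:ℝ)/2) := by
  have h1 := tanh_pos ht
  have h2 := one_sub_tanh_sq_pos t
  rw [sinh_two_mul_eq_tanh, div_rpow (by positivity) h2.le, mul_rpow (by norm_num) h1.le,
    div_eq_mul_inv, ← rpow_neg h2.le]
  norm_num

lemma one_sub_sq_rpow_eq {s : ℝ} (h1 : -1 ≤ s) (h2 : s ≤ 1) (e : ℝ) :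
    (1 - s ^ 2) ^ e = (1 - s) ^ e * (1 + s) ^ e := by
  rw [show 1 - s ^ 2 = (1 - s) * (1 + s) by ring, mul_rpow (by linarith) (by linarith)]

lemma intervalIntegrable_one_sub_sq_rpow {e : ℝ} (he : -1 < e) :
    IntervalIntegrable (fun s : ℝ => (1 - s ^ 2) ^ e) volume (-1) 1 := by
  have hleft : IntervalIntegrable (fun s : ℝ => (1 - s) ^ e * (1 + s) ^ e) volume (-1) 0 := by
    refine IntervalIntegrable.continuousOn_mul ?_ ?_
    · simpa using (intervalIntegrable_rpow' (a := 0) (b := 1) he).comp_add_left 1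
    · refine ContinuousOn.rpow_const (by fun_prop) fun s hs => Or.inl ?_
      rw [uIcc_of_le (by norm_num)] at hs
      linarith [hs.2]
  have hright : IntervalIntegrable (fun s : ℝ => (1 - s) ^ e * (1 + s) ^ e) volume 0 1 := by
    refine IntervalIntegrable.mul_continuousOn ?_ ?_
    · simpa using (intervalIntegrable_rpow' (a := 1) (b := 0) he).comp_sub_left 1
    · refine ContinuousOn.rpow_const (by fun_prop) fun s hs => Or.inl ?_
      rw [uIcc_of_le (by norm_num)] at hs
      linarith [hs.1]
  refine (hleft.trans hright).congr ?_
  intro s hs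
  rw [uIoc_of_le (by norm_num)] at hs
  exact (one_sub_sq_rpow_eq hs.1.le hs.2 e).symm

lemma intervalIntegrable_exp_mul_one_sub_sq_rpow {e : ℝ} (he : -1 < e) (z : ℝ) {a b : ℝ}
    (ha : a ∈ Icc (-1 : ℝ) 1) (hb : b ∈ Icc (-1 : ℝ) 1) :
    IntervalIntegrable (fun s : ℝ => exp (-z * s) * (1 - s ^ 2) ^ e) volume a b := by
  refine IntervalIntegrable.continuousOn_mul ?_ (by fun_prop)
  refine (intervalIntegrable_one_sub_sq_rpow he).mono_set ((uIcc_subset_Icc ha hb).trans ?_)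
  rw [uIcc_of_le (by norm_num)]

/-- Poisson's integral: `I_ν(z) = (z/2)^ν / (√π Γ(ν + 1/2)) * besselIntegral (ν - 1/2) z`
for the modified Bessel function `I_ν`. -/
noncomputable def besselIntegral (e z : ℝ) : ℝ :=
  ∫ s in (-1:ℝ)..1, exp (-z * s) * (1 - s ^ 2) ^ e

lemma besselIntegral_nonneg (e z : ℝ) : 0 ≤ besselIntegral e z := by
  refine integral_nonneg (by norm_num) fun s hs => ?_
  have : 0 ≤ 1 - s ^ 2 := by nlinarith [hs.1, hs.2]
  positivity

lemma integral_rpow_mul_exp_neg_mul_le {e z : ℝ} (he : -1 < e) (hz : 0 < z) :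
    ∫ u in (0:ℝ)..1, u ^ e * exp (-(z * u)) ≤ (1 / z) ^ (e + 1) * Gamma (e + 1) := by
  have hint : IntegrableOn (fun u : ℝ => u ^ e * exp (-(z * u))) (Ioi 0) := by
    simpa [neg_mul] using integrableOn_rpow_mul_exp_neg_mul_rpow he one_pos hz
  rw [← integral_rpow_mul_exp_neg_mul_Ioi (by linarith) hz, add_sub_cancel_right,
    integral_of_le zero_le_one]
  refine setIntegral_mono_set hint ?_ Ioc_subset_Ioi_self.eventuallyLE
  filter_upwards [ae_restrict_mem measurableSet_Ioi] with u hu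
  have : (0:ℝ) < u := hu
  positivity

lemma besselIntegral_le_two_mul_integral_neg {e z : ℝ} (he : -1 < e) (hz : 0 ≤ z) :
    besselIntegral e z ≤ 2 * ∫ s in (-1:ℝ)..0, exp (-z * s) * (1 - s ^ 2) ^ e := by
  have hint := fun z => intervalIntegrable_exp_mul_one_sub_sq_rpow (a := -1) (b := 0) he z
    ⟨le_rfl, by norm_num⟩ ⟨by norm_num, by norm_num⟩
  have hreflect : ∫ s in (0:ℝ)..1, exp (-z * s) * (1 - s ^ 2) ^ e
      = ∫ s in (-1:ℝ)..0, exp (-(-z) * s) * (1 - s ^ 2) ^ e := by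
    rw [← neg_zero, ← integral_comp_neg]
    simp only [neg_mul_neg, neg_sq, neg_zero]
  have hmono : ∫ s in (-1:ℝ)..0, exp (-(-z) * s) * (1 - s ^ 2) ^ e
      ≤ ∫ s in (-1:ℝ)..0, exp (-z * s) * (1 - s ^ 2) ^ e := by
    refine integral_mono_on (by norm_num) (hint (-z)) (hint z) fun s hs => ?_
    have : 0 ≤ 1 - s ^ 2 := by nlinarith [hs.1, hs.2]
    refine mul_le_mul_of_nonneg_right (exp_le_exp.2 ?_) (by positivity)
    nlinarith [hs.2]
  rw [besselIntegral, ← integral_add_adjacent_intervals (hint z)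
    (intervalIntegrable_exp_mul_one_sub_sq_rpow he z ⟨by norm_num, by norm_num⟩
      ⟨by norm_num, le_rfl⟩), hreflect]
  linarith

lemma min_one_two_rpow_le_rpow {w : ℝ} (h1 : 1 ≤ w) (h2 : w ≤ 2) (e : ℝ) :
    min 1 (2 ^ e) ≤ w ^ e := by
  rcases le_or_gt 0 e with he | he
  · exact (min_le_left _ _).trans (one_le_rpow h1 he)
  · exact (min_le_right _ _).trans (rpow_le_rpow_of_nonpos (by linarith) h2 he.le)

lemma rpow_le_max_one_two_rpow {w : ℝ} (h1 : 1 ≤ w) (h2 : w ≤ 2) (e : ℝ) :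
    w ^ e ≤ max 1 (2 ^ e) := by
  rcases le_or_gt 0 e with he | he
  · exact (rpow_le_rpow (by linarith) h2 he).trans (le_max_right _ _)
  · exact (rpow_le_one_of_one_le_of_nonpos h1 he.le).trans (le_max_left _ _)

lemma integral_neg_exp_mul_one_sub_sq_rpow_le {e z : ℝ} (he : -1 < e) (hz : 0 < z) :
    ∫ s in (-1:ℝ)..0, exp (-z * s) * (1 - s ^ 2) ^ e
      ≤ max 1 (2 ^ e) * exp z * ((1 / z) ^ (e + 1) * Gamma (e + 1)) := by
  have hshift : ∫ s in (-1:ℝ)..0, (1 + s) ^ e * exp (-(z * (1 + s)))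
      = ∫ u in (0:ℝ)..1, u ^ e * exp (-(z * u)) := by
    rw [integral_comp_add_left (fun u => u ^ e * exp (-(z * u)))]
    norm_num
  have hbound : ∀ s ∈ Icc (-1:ℝ) 0, exp (-z * s) * (1 - s ^ 2) ^ e
      ≤ max 1 (2 ^ e) * exp z * ((1 + s) ^ e * exp (-(z * (1 + s)))) := by
    intro s ⟨hs1, hs2⟩
    have hexp : exp (-z * s) = exp z * exp (-(z * (1 + s))) := by rw [← exp_add]; ring_nf
    have : 0 ≤ (1 + s) ^ e := rpow_nonneg (by linarith) e
    rw [one_sub_sq_rpow_eq hs1 (by linarith), hexp]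
    calc exp z * exp (-(z * (1 + s))) * ((1 - s) ^ e * (1 + s) ^ e)
        ≤ exp z * exp (-(z * (1 + s))) * (max 1 (2 ^ e) * (1 + s) ^ e) := by
          gcongr
          exact rpow_le_max_one_two_rpow (by linarith) (by linarith) e
      _ = _ := by ring
  calc ∫ s in (-1:ℝ)..0, exp (-z * s) * (1 - s ^ 2) ^ e
      ≤ ∫ s in (-1:ℝ)..0, max 1 (2 ^ e) * exp z * ((1 + s) ^ e * exp (-(z * (1 + s)))) := by
        refine integral_mono_on (by norm_num)
          (intervalIntegrable_exp_mul_one_sub_sq_rpow he z ⟨le_rfl, by norm_num⟩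
            ⟨by norm_num, by norm_num⟩) ?_ hbound
        refine IntervalIntegrable.const_mul (IntervalIntegrable.mul_continuousOn ?_
          (by fun_prop)) _
        simpa using (intervalIntegrable_rpow' (a := 0) (b := 1) he).comp_add_left 1
    _ = max 1 (2 ^ e) * exp z * ∫ u in (0:ℝ)..1, u ^ e * exp (-(z * u)) := by
        rw [intervalIntegral.integral_const_mul, hshift]
    _ ≤ max 1 (2 ^ e) * exp z * ((1 / z) ^ (e + 1) * Gamma (e + 1)) := by
        gcongr
        exact integral_rpow_mul_exp_neg_mul_le he hz

lemma rpow_mul_exp_neg_mul_besselIntegral_le {e z : ℝ} (he : -1 < e) (hz : 0 < z) :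
    z ^ (e + 1) * exp (-z) * besselIntegral e z ≤ 2 * max 1 (2 ^ e) * Gamma (e + 1) := by
  have hJ := (besselIntegral_le_two_mul_integral_neg he hz.le).trans
    (mul_le_mul_of_nonneg_left (integral_neg_exp_mul_one_sub_sq_rpow_le he hz) zero_le_two)
  have hzpow : z ^ (e + 1) * (1 / z) ^ (e + 1) = 1 := by
    rw [← mul_rpow hz.le (by positivity), mul_one_div_cancel hz.ne', one_rpow]
  calc z ^ (e + 1) * exp (-z) * besselIntegral e z
      ≤ z ^ (e + 1) * exp (-z)
          * (2 * (max 1 (2 ^ e) * exp z * ((1 / z) ^ (e + 1) * Gamma (e + 1)))) := by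
        gcongr
    _ = 2 * max 1 (2 ^ e) * Gamma (e + 1) * (z ^ (e + 1) * (1 / z) ^ (e + 1))
          * (exp (-z) * exp z) := by ring
    _ = 2 * max 1 (2 ^ e) * Gamma (e + 1) := by rw [hzpow, ← exp_add]; simp

lemma exp_mul_integral_le_besselIntegral {e z : ℝ} (he : -1 < e) (hz : 1 ≤ z) :
    exp (z - 1) * min 1 (2 ^ e) * ((1 / z) ^ (e + 1) / (e + 1)) ≤ besselIntegral e z := by
  have hz0 : 0 < z := by linarith
  have hzinv : 1 / z ≤ 1 := by rw [div_le_one hz0]; exact hz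
  set c : ℝ := -1 + 1 / z with hc
  have hcmem : c ∈ Icc (-1:ℝ) 1 := ⟨by simp [hc]; positivity, by linarith⟩
  have hint_left := intervalIntegrable_exp_mul_one_sub_sq_rpow he z
    ⟨le_rfl, by norm_num⟩ hcmem
  have hint_right := intervalIntegrable_exp_mul_one_sub_sq_rpow he z hcmem ⟨by norm_num, le_rfl⟩
  have hright_nonneg : 0 ≤ ∫ s in c..1, exp (-z * s) * (1 - s ^ 2) ^ e := by
    refine integral_nonneg hcmem.2 fun s hs => ?_
    have : 0 ≤ 1 - s ^ 2 := by nlinarith [hs.1, hs.2, hcmem.1]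
    positivity
  have hbound : ∀ s ∈ Icc (-1:ℝ) c,
      exp (z - 1) * min 1 (2 ^ e) * (1 + s) ^ e ≤ exp (-z * s) * (1 - s ^ 2) ^ e := by
    intro s ⟨hs1, hs2⟩
    have hzc : z * c = 1 - z := by rw [hc]; field_simp; ring
    have : 0 ≤ (1 + s) ^ e := rpow_nonneg (by linarith) e
    rw [one_sub_sq_rpow_eq hs1 (by linarith), ← mul_assoc]
    gcongr
    · nlinarith
    · exact min_one_two_rpow_le_rpow (by linarith) (by linarith) e
  have hpow : ∫ s in (-1:ℝ)..c, (1 + s) ^ e = (1 / z) ^ (e + 1) / (e + 1) := by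
    rw [integral_comp_add_left (fun u => u ^ e), integral_rpow (Or.inl he), hc]
    norm_num [zero_rpow (by linarith : e + 1 ≠ 0)]
  calc exp (z - 1) * min 1 (2 ^ e) * ((1 / z) ^ (e + 1) / (e + 1))
      = ∫ s in (-1:ℝ)..c, exp (z - 1) * min 1 (2 ^ e) * (1 + s) ^ e := by
        rw [intervalIntegral.integral_const_mul, hpow]
    _ ≤ ∫ s in (-1:ℝ)..c, exp (-z * s) * (1 - s ^ 2) ^ e := by
        refine integral_mono_on hcmem.1 (IntervalIntegrable.const_mul ?_ _) hint_left hbound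
        have := (intervalIntegrable_rpow' (a := 0) (b := 1 / z) he).comp_add_left 1
        rwa [zero_sub, show 1 / z - 1 = c by rw [hc]; ring] at this
    _ ≤ besselIntegral e z := by
        rw [besselIntegral, ← integral_add_adjacent_intervals hint_left hint_right]
        linarith

lemma le_rpow_mul_exp_neg_mul_besselIntegral {e z : ℝ} (he : -1 < e) (hz : 1 ≤ z) :
    exp (-1) * min 1 (2 ^ e) / (e + 1) ≤ z ^ (e + 1) * exp (-z) * besselIntegral e z := by
  have hz0 : 0 < z := by linarith
  have hzpow : z ^ (e + 1) * (1 / z) ^ (e + 1) = 1 := by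
    rw [← mul_rpow hz0.le (by positivity), mul_one_div_cancel hz0.ne', one_rpow]
  calc exp (-1) * min 1 (2 ^ e) / (e + 1)
      = z ^ (e + 1) * exp (-z) * (exp (z - 1) * min 1 (2 ^ e) * ((1 / z) ^ (e + 1) / (e + 1))) := by
        rw [show exp (-1) = exp (-z) * exp (z - 1) by rw [← exp_add]; ring_nf]
        field_simp
        rw [hzpow]
    _ ≤ z ^ (e + 1) * exp (-z) * besselIntegral e z := by
        gcongr
        exact exp_mul_integral_le_besselIntegral he hz

noncomputable def heatMajorant (x y t : ℝ) : ℝ :=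
  sinh (2 * t) ^ (-(1:ℝ)/2) * exp (-(x - y) ^ 2 / (4 * tanh t) - tanh t * (x + y) ^ 2 / 4)

lemma heatMajorant_nonneg (x y : ℝ) {t : ℝ} (ht : 0 < t) : 0 ≤ heatMajorant x y t := by
  have : 0 < sinh (2 * t) := sinh_pos_iff.2 (by positivity)
  unfold heatMajorant
  positivity

lemma lagHeatC_eq (β : ℝ) {t x y : ℝ} (hx : 0 < x) (hy : 0 < y) (ht : 0 < t) :
    lagHeatC β t x y = (x * y) ^ (-β - 1/2) * heatMajorant x y t
      * ((x * y / sinh (2 * t)) ^ (β + 1/2) * exp (-(x * y / sinh (2 * t)))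
        * besselIntegral (β - 1/2) (x * y / sinh (2 * t)))
      / (2 ^ β * √π * Gamma (β + 1/2)) := by
  have hxy : 0 < x * y := mul_pos hx hy
  have hS : 0 < sinh (2 * t) := sinh_pos_iff.2 (by positivity)
  set S := sinh (2 * t)
  set A := -(1/2) * (cosh (2 * t) / S) * (x ^ 2 + y ^ 2)
  set N := 2 ^ β * √π * Gamma (β + 1/2)
  have hint : ∫ s in (-1:ℝ)..1, exp (A - x * y * s / S) * ((1 - s ^ 2) ^ (β - 1/2) / N)
      = exp A / N * besselIntegral (β - 1/2) (x * y / S) := by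
    rw [besselIntegral, ← intervalIntegral.integral_const_mul]
    refine integral_congr fun s _ => ?_
    rw [show A - x * y * s / S = A + -(x * y / S) * s by ring, exp_add]
    ring
  have hexp : exp A = exp (-(x - y) ^ 2 / (4 * tanh t) - tanh t * (x + y) ^ 2 / 4)
      * exp (-(x * y / S)) := by
    rw [← heat_exponent_eq_tanh ht, ← exp_add]
    congr 1
    ring
  have hpow : (x * y) ^ (β + 1/2) * S ^ (-1 - β)
      = S ^ (-(1:ℝ)/2) * (x * y / S) ^ (β + 1/2) := by
    rw [div_rpow hxy.le hS.le, show (-1 - β) = -(1:ℝ)/2 - (β + 1/2) by ring, rpow_sub hS]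
    ring
  rw [lagHeatC, lagHeatH, hint, heatMajorant]
  calc _ = (x * y) ^ (-β - 1/2) * ((x * y) ^ (β + 1/2) * S ^ (-1 - β)) * exp A
        * besselIntegral (β - 1/2) (x * y / S) / N := by ring
    _ = _ := by rw [hpow, hexp]; ring

lemma lagHeatC_nonneg {β : ℝ} (hβ : -(1/2) < β) {t x y : ℝ} (hx : 0 < x) (hy : 0 < y)
    (ht : 0 < t) : 0 ≤ lagHeatC β t x y := by
  have : 0 < Gamma (β + 1/2) := Gamma_pos_of_pos (by linarith)
  have := heatMajorant_nonneg x y ht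
  have := besselIntegral_nonneg (β - 1/2) (x * y / sinh (2 * t))
  rw [lagHeatC_eq β hx hy ht]
  positivity

lemma max_one_two_rpow_sub_half_le {β : ℝ} (hβ : -(1/2) ≤ β) :
    max 1 (2 ^ (β - 1/2)) ≤ √2 * 2 ^ β := by
  rw [sqrt_eq_rpow, ← rpow_add two_pos]
  refine max_le (one_le_rpow (by norm_num) (by linarith)) ?_
  exact rpow_le_rpow_of_exponent_le (by norm_num) (by linarith)

lemma lagHeatC_le {β : ℝ} (hβ : -(1/2) < β) {t x y : ℝ} (hx : 0 < x) (hy : 0 < y)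
    (ht : 0 < t) :
    lagHeatC β t x y ≤ 2 * √2 / √π * ((x * y) ^ (-β - 1/2) * heatMajorant x y t) := by
  have hΓ : 0 < Gamma (β + 1/2) := Gamma_pos_of_pos (by linarith)
  have hz : 0 < x * y / sinh (2 * t) := div_pos (mul_pos hx hy) (sinh_pos_iff.2 (by positivity))
  have hbessel := rpow_mul_exp_neg_mul_besselIntegral_le (e := β - 1/2) (by linarith) hz
  rw [show β - 1/2 + 1 = β + 1/2 by ring] at hbessel
  have := heatMajorant_nonneg x y ht
  rw [lagHeatC_eq β hx hy ht]
  calc _ ≤ (x * y) ^ (-β - 1/2) * heatMajorant x y t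
        * (2 * max 1 (2 ^ (β - 1/2)) * Gamma (β + 1/2)) / (2 ^ β * √π * Gamma (β + 1/2)) := by
        gcongr
    _ = 2 * max 1 (2 ^ (β - 1/2)) / (2 ^ β * √π)
        * ((x * y) ^ (-β - 1/2) * heatMajorant x y t) := by
        rw [mul_div_assoc, mul_div_mul_right _ _ hΓ.ne']
        ring
    _ ≤ 2 * (√2 * 2 ^ β) / (2 ^ β * √π) * ((x * y) ^ (-β - 1/2) * heatMajorant x y t) := by
        gcongr
        exact max_one_two_rpow_sub_half_le hβ.le
    _ = 2 * √2 / √π * ((x * y) ^ (-β - 1/2) * heatMajorant x y t) := by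
        field_simp

lemma exists_mul_heatMajorant_le_lagHeatC {β : ℝ} (hβ : -(1/2) < β) :
    ∃ c > 0, ∀ t x y : ℝ, 0 < x → 0 < y → 0 < t → sinh (2 * t) ≤ x * y →
      c * ((x * y) ^ (-β - 1/2) * heatMajorant x y t) ≤ lagHeatC β t x y := by
  have hΓ : 0 < Gamma (β + 1/2) := Gamma_pos_of_pos (by linarith)
  have hb : 0 < β + 1/2 := by linarith
  refine ⟨exp (-1) * min 1 (2 ^ (β - 1/2)) / (β + 1/2) / (2 ^ β * √π * Gamma (β + 1/2)),
    by positivity, fun t x y hx hy ht hS => ?_⟩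
  have hS0 : 0 < sinh (2 * t) := sinh_pos_iff.2 (by positivity)
  have hz : 1 ≤ x * y / sinh (2 * t) := by rwa [le_div_iff₀ hS0, one_mul]
  have hbessel := le_rpow_mul_exp_neg_mul_besselIntegral (e := β - 1/2) (by linarith) hz
  rw [show β - 1/2 + 1 = β + 1/2 by ring] at hbessel
  have := heatMajorant_nonneg x y ht
  rw [lagHeatC_eq β hx hy ht]
  calc exp (-1) * min 1 (2 ^ (β - 1/2)) / (β + 1/2) / (2 ^ β * √π * Gamma (β + 1/2))
        * ((x * y) ^ (-β - 1/2) * heatMajorant x y t)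
      = (x * y) ^ (-β - 1/2) * heatMajorant x y t * (exp (-1) * min 1 (2 ^ (β - 1/2)) / (β + 1/2))
        / (2 ^ β * √π * Gamma (β + 1/2)) := by ring
    _ ≤ _ := by gcongr

noncomputable def kbarIntegrand (σ x y ξ : ℝ) : ℝ :=
  (log ((1 + ξ) / (1 - ξ))) ^ (σ - 1) * ξ ^ (-(1:ℝ)/2) * (1 - ξ ^ 2) ^ (-(1:ℝ)/2) *
    exp (-(x - y) ^ 2 / (4 * ξ) - ξ * (x + y) ^ 2 / 4)

lemma abs_deriv_tanh_smul_kbarIntegrand (σ x y : ℝ) {t : ℝ} (ht : 0 < t) :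
    |1 - tanh t ^ 2| • kbarIntegrand σ x y (tanh t)
      = 2 ^ (σ - 1/2) * (heatMajorant x y t * t ^ (σ - 1)) := by
  have hth := one_sub_tanh_sq_pos t
  have hjac : (1 - tanh t ^ 2) * (1 - tanh t ^ 2) ^ (-(1:ℝ)/2)
      = (1 - tanh t ^ 2) ^ ((1:ℝ)/2) := by
    rw [show (1:ℝ)/2 = 1 + -(1:ℝ)/2 by norm_num, rpow_add hth, rpow_one]
  have htwo : (2:ℝ) ^ (σ - 1) = 2 ^ (σ - 1/2) * 2 ^ (-(1:ℝ)/2) := by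
    rw [← rpow_add two_pos]; ring_nf
  rw [abs_of_pos hth, smul_eq_mul, kbarIntegrand, heatMajorant, log_one_add_tanh_div_one_sub_tanh,
    mul_rpow zero_le_two ht.le, sinh_two_mul_rpow_neg_half ht, htwo]
  linear_combination (2 ^ (σ - 1/2) * 2 ^ (-(1:ℝ)/2) * t ^ (σ - 1) * tanh t ^ (-(1:ℝ)/2)
    * exp (-(x - y) ^ 2 / (4 * tanh t) - tanh t * (x + y) ^ 2 / 4)) * hjac

lemma Kbar_eq_integral_heatMajorant (α σ x y : ℝ) :
    Kbar α σ x y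
      = 2 ^ (σ - 1/2) * (x * y) ^ (-α - 1/2) * ∫ t in Ioi 0, heatMajorant x y t * t ^ (σ - 1) := by
  change (x * y) ^ (-α - 1/2) * ∫ ξ in Ioo 0 1, kbarIntegrand σ x y ξ = _
  rw [← tanh_image_Ioi_zero, integral_image_eq_integral_abs_deriv_smul measurableSet_Ioi
    (fun t _ => (hasDerivAt_tanh t).hasDerivWithinAt) tanh_injective.injOn,
    setIntegral_congr_fun measurableSet_Ioi fun t ht => abs_deriv_tanh_smul_kbarIntegrand σ x y ht,
    MeasureTheory.integral_const_mul]
  ring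

lemma continuousOn_heatMajorant (x y : ℝ) : ContinuousOn (heatMajorant x y) (Ioi 0) := by
  have hsinh : ∀ t ∈ Ioi (0:ℝ), sinh (2 * t) ≠ 0 := fun t ht =>
    (sinh_pos_iff.2 (by simpa using ht)).ne'
  have htanh : ∀ t ∈ Ioi (0:ℝ), 4 * tanh t ≠ 0 := fun t ht =>
    (mul_pos four_pos (tanh_pos ht)).ne'
  have := continuous_tanh
  unfold heatMajorant
  refine ContinuousOn.mul (ContinuousOn.rpow_const (by fun_prop) fun t ht => Or.inl (hsinh t ht))
    (ContinuousOn.rexp (ContinuousOn.sub (ContinuousOn.div (by fun_prop) (by fun_prop) htanh)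
      (by fun_prop)))

lemma heatMajorant_le_exp_neg (x y : ℝ) {T t : ℝ} (hT : 0 < T) (hTt : T ≤ t) :
    heatMajorant x y t ≤ ((1 - exp (-(4 * T))) / 2) ^ (-(1:ℝ)/2) * exp (-t) := by
  have ht : 0 < t := hT.trans_le hTt
  have hc : 0 < (1 - exp (-(4 * T))) / 2 := by
    have : exp (-(4 * T)) < 1 := exp_lt_one_iff.2 (by linarith)
    linarith
  have hsinh : exp (2 * t) * ((1 - exp (-(4 * T))) / 2) ≤ sinh (2 * t) := by
    have : exp (-(2 * t)) ≤ exp (2 * t) * exp (-(4 * T)) := by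
      rw [← exp_add]; exact exp_le_exp.2 (by linarith)
    rw [sinh_eq]
    linarith
  have hexp : exp (-(x - y) ^ 2 / (4 * tanh t) - tanh t * (x + y) ^ 2 / 4) ≤ 1 := by
    have := tanh_pos ht
    rw [exp_le_one_iff, neg_div]
    have : 0 ≤ (x - y) ^ 2 / (4 * tanh t) := by positivity
    have : 0 ≤ tanh t * (x + y) ^ 2 / 4 := by positivity
    linarith
  have hpow : (exp (2 * t) * ((1 - exp (-(4 * T))) / 2)) ^ (-(1:ℝ)/2)
      = ((1 - exp (-(4 * T))) / 2) ^ (-(1:ℝ)/2) * exp (-t) := by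
    rw [mul_rpow (exp_pos _).le hc.le, ← exp_mul, mul_comm]
    ring_nf
  calc heatMajorant x y t
      ≤ (exp (2 * t) * ((1 - exp (-(4 * T))) / 2)) ^ (-(1:ℝ)/2) * 1 := by
        unfold heatMajorant
        have : 0 < sinh (2 * t) := sinh_pos_iff.2 (by positivity)
        exact mul_le_mul (rpow_le_rpow_of_nonpos (by positivity) hsinh (by norm_num)) hexp
          (exp_pos _).le (by positivity)
    _ = _ := by rw [mul_one, hpow]

lemma integrableOn_Ioi_heatMajorant_mul_rpow (x y : ℝ) {T σ : ℝ} (hT : 0 < T) (hσ : 0 < σ) :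
    IntegrableOn (fun t => heatMajorant x y t * t ^ (σ - 1)) (Ioi T) := by
  have hsub : Ioi T ⊆ Ioi 0 := Ioi_subset_Ioi hT.le
  refine Integrable.mono' (((GammaIntegral_convergent hσ).mono_set hsub).const_mul
    (((1 - exp (-(4 * T))) / 2) ^ (-(1:ℝ)/2)))
    ((((continuousOn_heatMajorant x y).mono hsub).mul
      (continuousOn_id.rpow_const fun t ht => Or.inl (hsub ht).ne')).aestronglyMeasurable
      measurableSet_Ioi) ?_
  rw [ae_restrict_iff' measurableSet_Ioi]
  refine Filter.Eventually.of_forall fun t (ht : T < t) => ?_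
  have ht0 : 0 < t := hT.trans ht
  have := heatMajorant_nonneg x y ht0
  rw [norm_of_nonneg (by positivity), ← mul_assoc]
  gcongr
  exact heatMajorant_le_exp_neg x y hT ht.le

lemma integrableOn_heatMajorant_of_integrableOn_lagHeatC {β σ x y : ℝ} (hβ : -(1/2) < β)
    (hσ : 0 < σ) (hx : 0 < x) (hy : 0 < y)
    (h : IntegrableOn (fun t => lagHeatC β t x y * t ^ (σ - 1)) (Ioi 0)) :
    IntegrableOn (fun t => heatMajorant x y t * t ^ (σ - 1)) (Ioi 0) := by
  obtain ⟨c, hc, hlow⟩ := exists_mul_heatMajorant_le_lagHeatC hβ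
  have hxy : 0 < x * y := mul_pos hx hy
  set T := arsinh (x * y) / 2
  have hT : 0 < T := by have := arsinh_pos_iff.2 hxy; positivity
  have hsinhT : sinh (2 * T) = x * y := by rw [mul_div_cancel₀ _ two_ne_zero, sinh_arsinh]
  have hk : 0 < c * (x * y) ^ (-β - 1/2) := by positivity
  have hnear : IntegrableOn (fun t => heatMajorant x y t * t ^ (σ - 1)) (Ioc 0 T) := by
    refine Integrable.mono'
      ((h.mono_set Ioc_subset_Ioi_self).const_mul (c * (x * y) ^ (-β - 1/2))⁻¹)
      ((((continuousOn_heatMajorant x y).mono Ioc_subset_Ioi_self).mul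
        (continuousOn_id.rpow_const fun t ht => Or.inl ht.1.ne')).aestronglyMeasurable
        measurableSet_Ioc) ?_
    rw [ae_restrict_iff' measurableSet_Ioc]
    refine Filter.Eventually.of_forall fun t ⟨ht0, htT⟩ => ?_
    have := heatMajorant_nonneg x y ht0
    have hsinh : sinh (2 * t) ≤ x * y := hsinhT ▸ sinh_le_sinh.2 (by linarith)
    rw [norm_of_nonneg (by positivity), le_inv_mul_iff₀ hk]
    calc c * (x * y) ^ (-β - 1/2) * (heatMajorant x y t * t ^ (σ - 1))
        = c * ((x * y) ^ (-β - 1/2) * heatMajorant x y t) * t ^ (σ - 1) := by ring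
      _ ≤ lagHeatC β t x y * t ^ (σ - 1) := by
        gcongr
        exact hlow t x y hx hy ht0 hsinh
  rw [← Ioc_union_Ioi_eq_Ioi hT.le]
  exact hnear.union (integrableOn_Ioi_heatMajorant_mul_rpow x y hT hσ)

lemma integral_lagHeatC_mul_rpow_le {β σ x y : ℝ} (hβ : -(1/2) < β) (hσ : 0 < σ)
    (hx : 0 < x) (hy : 0 < y) :
    ∫ t in Ioi 0, lagHeatC β t x y * t ^ (σ - 1)
      ≤ 2 * √2 / √π * (x * y) ^ (-β - 1/2)
        * ∫ t in Ioi 0, heatMajorant x y t * t ^ (σ - 1) := by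
  by_cases hH : IntegrableOn (fun t => heatMajorant x y t * t ^ (σ - 1)) (Ioi 0)
  · rw [← MeasureTheory.integral_const_mul]
    refine integral_mono_of_nonneg ?_ (hH.const_mul _) ?_ <;>
      refine (ae_restrict_iff' measurableSet_Ioi).2 (Filter.Eventually.of_forall fun t ht => ?_)
    · exact mul_nonneg (lagHeatC_nonneg hβ hx hy ht) (rpow_nonneg (le_of_lt ht) _)
    · calc lagHeatC β t x y * t ^ (σ - 1)
          ≤ 2 * √2 / √π * ((x * y) ^ (-β - 1/2) * heatMajorant x y t) * t ^ (σ - 1) := by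
            gcongr
            · exact rpow_nonneg (le_of_lt ht) _
            · exact lagHeatC_le hβ hx hy ht
        _ = _ := by ring
  · -- the lower bound `exists_mul_heatMajorant_le_lagHeatC` makes both integrals diverge, hence `0`
    rw [integral_undef (mt (integrableOn_heatMajorant_of_integrableOn_lagHeatC hβ hσ hx hy) hH),
      integral_undef hH, mul_zero]

theorem stmt18_general (α a σ : ℝ) (hα : -(1/2) < α) (ha : 1 ≤ a) (hσ0 : 0 < σ) :
    ∃ C : ℝ, 0 < C ∧ ∀ j : ℕ, ∀ x y : ℝ, 0 < x → 0 < y →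
      x ^ (a * (j:ℝ)) * y ^ (a * (j:ℝ)) * potC (α + a * (j:ℝ)) σ x y ≤ C * Kbar α σ x y := by
  refine ⟨(Gamma σ)⁻¹ * (2 * √2 / √π) * 2 ^ (1/2 - σ), by positivity, fun j x y hx hy => ?_⟩
  set β := α + a * j
  have hxy : 0 < x * y := mul_pos hx hy
  have hβ : -(1/2) < β := by
    have : 0 ≤ a * (j:ℝ) := mul_nonneg (by linarith) j.cast_nonneg
    linarith
  have hxypow : (x * y) ^ (a * (j:ℝ)) * (x * y) ^ (-β - 1/2) = (x * y) ^ (-α - 1/2) := by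
    rw [← rpow_add hxy]
    congr 1
    simp only [β]
    ring
  have htwo : (2:ℝ) ^ (1/2 - σ) * 2 ^ (σ - 1/2) = 1 := by
    rw [← rpow_add two_pos]; norm_num
  rw [← mul_rpow hx.le hy.le, potC, Kbar_eq_integral_heatMajorant]
  calc (x * y) ^ (a * (j:ℝ)) * ((Gamma σ)⁻¹ * ∫ t in Ioi 0, lagHeatC β t x y * t ^ (σ - 1))
      ≤ (x * y) ^ (a * (j:ℝ)) * ((Gamma σ)⁻¹ * (2 * √2 / √π * (x * y) ^ (-β - 1/2)
          * ∫ t in Ioi 0, heatMajorant x y t * t ^ (σ - 1))) := by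
        gcongr
        exact integral_lagHeatC_mul_rpow_le hβ hσ0 hx hy
    _ = (Gamma σ)⁻¹ * (2 * √2 / √π) * ((x * y) ^ (a * (j:ℝ)) * (x * y) ^ (-β - 1/2))
          * ∫ t in Ioi 0, heatMajorant x y t * t ^ (σ - 1) := by ring
    _ = (Gamma σ)⁻¹ * (2 * √2 / √π) * (2 ^ (1/2 - σ) * 2 ^ (σ - 1/2)) * (x * y) ^ (-α - 1/2)
          * ∫ t in Ioi 0, heatMajorant x y t * t ^ (σ - 1) := by rw [hxypow, htwo, mul_one]
    _ = _ := by ring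

/-- for `α > −1/2`, `a ≥ 1`, `0 < σ < α+1` there is `C = C(α,σ)`
(independent of `j`) with `x^{aj} y^{aj} H_{α+aj,σ}(x,y) ≤ C \overline{K}_{α,σ}(x,y)`
for every integer `j ≥ 0` and all `x, y > 0`. -/
theorem stmt18 (α a σ : ℝ) (hα : -(1/2) < α) (ha : 1 ≤ a) (hσ0 : 0 < σ) (hσ1 : σ < α + 1) :
    ∃ C : ℝ, 0 < C ∧ ∀ j : ℕ, ∀ x y : ℝ, 0 < x → 0 < y →
      x ^ (a * (j:ℝ)) * y ^ (a * (j:ℝ)) * potC (α + a * (j:ℝ)) σ x y ≤ C * Kbar α σ x y :=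
  stmt18_general α a σ hα ha hσ0
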